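/- arXiv:1208.2360 — 4 statements merged into one kernel-verified Lean document; each statement's English description precedes it below -/
import Mathlib

section
/- Let F, G, H be groupoids, let X : Gᵒᵖ × F ⥤ Type be such that for every object γ of G the F-set X(γ, -) : F ⥤ Type is free and finite, and let Y : Hᵒᵖ × G ⥤ Type be such that for every object η of H the G-set Y(η, -) : G ⥤ Type is free and finite. Then for every object η of H, the F-set φ ↦ (coend over γ ∈ G of X(γ, φ) × Y(η, γ)) is free and finite. -/
/-! If `f₁, f₂ : φ ⟶ φ'` send a class `[γ, (x, y)]` of the coend to the same class, this is
witnessed by some `g : γ ⟶ γ` fixing `y`; freeness of `Y(η, -)` gives `g = 𝟙`, and then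
freeness of `X(γ, -)` gives `f₁ = f₂`. For finiteness, sliding along `G` moves `(γ, y)` to a
chosen representative of its orbit in `Y(η, -)`, after which the `F`-orbit of `[γ, (x, y)]` is
determined by the `F`-orbit of the transported `x` in `X(γ, -)`. So the orbits of the coend are
covered by the finite set of pairs (orbit of `Y(η, -)`, orbit of the corresponding `X(γ, -)`). -/

open CategoryTheory Opposite

universe w v₁ v₂ v₃ u₁ u₂ u₃

namespace BiSet

variable {A : Type u₁} {B : Type u₂} [Groupoid.{v₁} A] [Groupoid.{v₂} B]
variable (X : Aᵒᵖ × B ⥤ Type w)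

/-- The left (covariant) action `x ↦ g • x` of a bi-set `X : Aᵒᵖ × B ⥤ Type`. -/
def lAct {b b' : B} (g : b ⟶ b') (a : A) : X.obj (op a, b) → X.obj (op a, b') :=
  X.map ((𝟙 (op a), g) : (op a, b) ⟶ (op a, b'))

/-- The right (contravariant) action `x ↦ x • h` of a bi-set `X : Aᵒᵖ × B ⥤ Type`. -/
def rAct {a' a : A} (h : a' ⟶ a) (b : B) : X.obj (op a, b) → X.obj (op a', b) :=
  X.map ((h.op, 𝟙 b) : (op a, b) ⟶ (op a', b))

variable {X}

theorem lAct_id {b : B} (a : A) (x : X.obj (op a, b)) : lAct X (𝟙 b) a x = x := by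
  show X.map (𝟙 (op a, b)) x = x
  simp

theorem rAct_id {a : A} (b : B) (x : X.obj (op a, b)) : rAct X (𝟙 a) b x = x := by
  show X.map (𝟙 (op a, b)) x = x
  simp

theorem lAct_comp {b b' b'' : B} (g : b ⟶ b') (g' : b' ⟶ b'') (a : A)
    (x : X.obj (op a, b)) : lAct X (g ≫ g') a x = lAct X g' a (lAct X g a x) := by
  unfold lAct
  rw [← FunctorToTypes.map_comp_apply, prod_comp]
  simp only [Category.comp_id]

theorem rAct_comp {a a' a'' : A} (h : a ⟶ a') (h' : a' ⟶ a'') (b : B)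
    (x : X.obj (op a'', b)) : rAct X (h ≫ h') b x = rAct X h b (rAct X h' b x) := by
  unfold rAct
  rw [← FunctorToTypes.map_comp_apply, prod_comp]
  simp only [Category.comp_id, op_comp]

theorem lAct_rAct {b b' : B} {a' a : A} (g : b ⟶ b') (h : a' ⟶ a) (x : X.obj (op a, b)) :
    lAct X g a' (rAct X h b x) = rAct X h b' (lAct X g a x) := by
  unfold lAct rAct
  rw [← FunctorToTypes.map_comp_apply, ← FunctorToTypes.map_comp_apply, prod_comp, prod_comp]
  simp

end BiSet

/-- Freeness for a `Type`-valued functor: all orbit maps `g ↦ g • x` are injective. -/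
def GSetFree {C : Type u} [Category.{v} C] (T : C ⥤ Type w') : Prop :=
  ∀ ⦃c c' : C⦄ (x : T.obj c), Function.Injective fun g : c ⟶ c' => T.map g x

/-- The relation on `Σ c, T c` whose quotient is the colimit of `T` in `Type`. -/
def ColimRel {C : Type u} [Category.{v} C] (T : C ⥤ Type w') :
    (Σ c : C, T.obj c) → (Σ c : C, T.obj c) → Prop :=
  fun x y => ∃ g : x.1 ⟶ y.1, T.map g x.2 = y.2

/-- Finiteness for a `Type`-valued functor: its colimit in `Type` is a finite set. -/
def GSetFinite {C : Type u} [Category.{v} C] (T : C ⥤ Type w') : Prop :=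
  Finite (Quot (ColimRel T))

section Composition

variable {F : Type u₁} {G : Type u₂} {H : Type u₃}
  [Groupoid.{v₁} F] [Groupoid.{v₂} G] [Groupoid.{v₃} H]

/-- The relation on `Σ γ, X(γ, φ) × Y(η, γ)` generated by `(x • g, y) ~ (x, g • y)`; its
quotient is the coend `(X ×_G Y)(η, φ)` defining the composite of the bi-sets `X` and `Y`. -/
def BiSetCompRel (X : Gᵒᵖ × F ⥤ Type w) (Y : Hᵒᵖ × G ⥤ Type w) (η : H) (φ : F) :
    (Σ γ : G, X.obj (op γ, φ) × Y.obj (op η, γ)) →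
      (Σ γ : G, X.obj (op γ, φ) × Y.obj (op η, γ)) → Prop :=
  fun a b => ∃ g : a.1 ⟶ b.1,
    a.2.1 = BiSet.rAct X g φ b.2.1 ∧ b.2.2 = BiSet.lAct Y g η a.2.2

/-- For fixed `η`, the composite `F`-set `φ ↦ (X ×_G Y)(η, φ)`, the coend over `γ ∈ G` of
`X(γ, φ) × Y(η, γ)`, with `F` acting through its action on `X`. -/
def compGSet (X : Gᵒᵖ × F ⥤ Type w) (Y : Hᵒᵖ × G ⥤ Type w) (η : H) :
    F ⥤ Type (max u₂ w) where
  obj φ := Quot (BiSetCompRel X Y η φ)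
  map {φ φ'} f :=
    TypeCat.ofHom (Quot.map
      (fun a => (⟨a.1, (BiSet.lAct X f a.1 a.2.1, a.2.2)⟩ :
        Σ γ : G, X.obj (op γ, φ') × Y.obj (op η, γ)))
      (by
        rintro ⟨γa, x, y⟩ ⟨γb, x', y'⟩ ⟨g, hx, hy⟩
        refine ⟨g, ?_, hy⟩
        dsimp at *
        rw [hx, BiSet.lAct_rAct]) :
      Quot (BiSetCompRel X Y η φ) → Quot (BiSetCompRel X Y η φ'))
  map_id φ := by
    ext z
    induction z using Quot.ind with
    | _ a =>
      show Quot.mk _ _ = Quot.mk _ _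
      simp [BiSet.lAct_id]
  map_comp f g := by
    ext z
    induction z using Quot.ind with
    | _ a =>
      show Quot.mk _ _ = Quot.mk _ _
      simp [BiSet.lAct_comp]

section Colimit

variable {C : Type*} [Groupoid C] (T : C ⥤ Type*)

theorem colimRel_equivalence : Equivalence (ColimRel T) where
  refl a := ⟨𝟙 a.1, by simp⟩
  symm {a b} := fun ⟨g, h⟩ => ⟨Groupoid.inv g, by
    rw [← h, ← Functor.map_comp_apply, Groupoid.comp_inv, Functor.map_id_apply]⟩
  trans {a b c} := fun ⟨g, h⟩ ⟨g', h'⟩ => ⟨g ≫ g', by rw [Functor.map_comp_apply, h, h']⟩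

theorem colimRel_out_mk (a : Σ c : C, T.obj c) :
    ColimRel T (Quot.mk (ColimRel T) a).out a :=
  ((colimRel_equivalence T).quot_mk_eq_iff _ _).mp (Quot.out_eq _)

end Colimit

section BiSetComp

variable (X : Gᵒᵖ × F ⥤ Type w) (Y : Hᵒᵖ × G ⥤ Type w) (η : H)

theorem biSetCompRel_equivalence (φ : F) : Equivalence (BiSetCompRel X Y η φ) where
  refl a := ⟨𝟙 a.1, (BiSet.rAct_id _ _).symm, (BiSet.lAct_id _ _).symm⟩
  symm {a b} := fun ⟨g, hx, hy⟩ => ⟨Groupoid.inv g,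
    by rw [hx, ← BiSet.rAct_comp, Groupoid.inv_comp, BiSet.rAct_id],
    by rw [hy, ← BiSet.lAct_comp, Groupoid.comp_inv, BiSet.lAct_id]⟩
  trans {a b c} := fun ⟨g, hx, hy⟩ ⟨g', hx', hy'⟩ => ⟨g ≫ g',
    by rw [hx, hx', BiSet.rAct_comp], by rw [hy', hy, BiSet.lAct_comp]⟩

variable {X Y η}

theorem compGSet_mk_lAct {φ : F} {γ γ' : G} (g : γ ⟶ γ') (x : X.obj (op γ', φ))
    (y : Y.obj (op η, γ)) :
    (Quot.mk _ ⟨γ', (x, BiSet.lAct Y g η y)⟩ : (compGSet X Y η).obj φ) =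
      Quot.mk _ ⟨γ, (BiSet.rAct X g φ x, y)⟩ :=
  (Quot.sound ⟨g, rfl, rfl⟩).symm

theorem compGSet_free (hXfree : ∀ γ : G, GSetFree ((Functor.curry.obj X).obj (op γ)))
    (hYfree : GSetFree ((Functor.curry.obj Y).obj (op η))) :
    GSetFree (compGSet X Y η) := by
  rintro φ φ' ⟨γ, x, y⟩ f₁ f₂ h
  obtain ⟨g, hx, hy⟩ := ((biSetCompRel_equivalence X Y η φ').quot_mk_eq_iff _ _).mp h
  obtain rfl : g = 𝟙 γ := hYfree y (hy.symm.trans (BiSet.lAct_id η y).symm)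
  exact hXfree γ x (hx.trans (BiSet.rAct_id φ' _))

theorem compGSet_finite (hXfin : ∀ γ : G, GSetFinite ((Functor.curry.obj X).obj (op γ)))
    (hYfin : GSetFinite ((Functor.curry.obj Y).obj (op η))) :
    GSetFinite (compGSet X Y η) := by
  let Xc (γ : G) := (Functor.curry.obj X).obj (op γ)
  let Yη := (Functor.curry.obj Y).obj (op η)
  have : Finite (Quot (ColimRel Yη)) := hYfin
  have (q : Quot (ColimRel Yη)) : Finite (Quot (ColimRel (Xc q.out.1))) := hXfin q.out.1
  refine Finite.of_surjective
    (fun t : Σ q : Quot (ColimRel Yη), Quot (ColimRel (Xc q.out.1)) =>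
      Quot.mk _ ⟨t.2.out.1, Quot.mk _ ⟨t.1.out.1, (t.2.out.2, t.1.out.2)⟩⟩) ?_
  rintro ⟨φ, ⟨γ, x, y⟩⟩
  let q : Quot (ColimRel Yη) := Quot.mk _ ⟨γ, y⟩
  obtain ⟨g, hg⟩ := colimRel_out_mk Yη ⟨γ, y⟩
  let p : Quot (ColimRel (Xc q.out.1)) := Quot.mk _ ⟨φ, BiSet.rAct X g φ x⟩
  obtain ⟨f, hf⟩ := colimRel_out_mk (Xc q.out.1) ⟨φ, BiSet.rAct X g φ x⟩
  refine ⟨⟨q, p⟩, Quot.sound (r := ColimRel (compGSet X Y η)) ⟨f, ?_⟩⟩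
  change (Quot.mk _ ⟨q.out.1, (BiSet.lAct X f q.out.1 p.out.2, q.out.2)⟩ :
    (compGSet X Y η).obj φ) = Quot.mk _ ⟨γ, (x, y)⟩
  rw [show BiSet.lAct X f q.out.1 p.out.2 = BiSet.rAct X g φ x from hf, ← compGSet_mk_lAct]
  exact congrArg (fun y' => (Quot.mk _ ⟨γ, (x, y')⟩ : (compGSet X Y η).obj φ)) hg

end BiSetComp

/-- If `X(γ, -)` is a free and finite `F`-set for every `γ` and `Y(η, -)` is a free and
finite `G`-set for every `η`, then the composite `F`-set `(X ×_G Y)(η, -)` is free and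
finite for every `η`. -/
theorem compGSet_free_and_finite (X : Gᵒᵖ × F ⥤ Type w) (Y : Hᵒᵖ × G ⥤ Type w)
    (hXfree : ∀ γ : G, GSetFree ((Functor.curry.obj X).obj (op γ)))
    (hXfin : ∀ γ : G, GSetFinite ((Functor.curry.obj X).obj (op γ)))
    (hYfree : ∀ η : H, GSetFree ((Functor.curry.obj Y).obj (op η)))
    (hYfin : ∀ η : H, GSetFinite ((Functor.curry.obj Y).obj (op η)))
    (η : H) :
    GSetFree (compGSet X Y η) ∧ GSetFinite (compGSet X Y η) :=
  ⟨compGSet_free hXfree (hYfree η), compGSet_finite hXfin (hYfin η)⟩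

end Composition
end

section
/- Let K, L, G be groupoids, p : L ⥤ G a functor, and m : K ⥤ G a finite weak cover. Then the projection functor from the bicategorical pullback K ×_G L (the comma category whose objects are triples (λ, κ, g : p λ → m κ) and whose morphisms (λ', κ', g') → (λ, κ, g) are pairs (l : λ' → λ, k : κ' → κ) with m(k) ∘ g' = g ∘ p(l)) to L, sending (λ, κ, g) to λ, is a finite weak cover. -/
/-!
The homotopy fiber of `Comma.fst p m` over `l` is `Comma (Under.forget l ⋙ p) m`. Since `L` is a
groupoid, `Under l` is contractible (every object is uniquely isomorphic to `𝟙 l`), so this comma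
category is equivalent to the homotopy fiber of `m` over `p l`. Thinness and the number of
connected components are invariant under equivalence.
-/

open CategoryTheory

/-- A functor is a *finite weak cover* if each of its homotopy fibers (structured-arrow
categories) is thin and has finitely many connected components. -/
def FiniteWeakCover {K : Type u₁} {G : Type u₂} [Category.{v₁} K] [Category.{v₂} G]
    (m : K ⥤ G) : Prop :=
  ∀ γ : G, Quiver.IsThin (StructuredArrow γ m) ∧
    Finite (ConnectedComponents (StructuredArrow γ m))

noncomputable section

namespace CategoryTheory

section Equivalence

variable {C : Type u₁} {D : Type u₂} [Category.{v₁} C] [Category.{v₂} D]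

theorem Functor.isThin_of_faithful (F : C ⥤ D) [F.Faithful] [Quiver.IsThin D] :
    Quiver.IsThin C :=
  fun _ _ => ⟨fun _ _ => F.map_injective (Subsingleton.elim _ _)⟩

def Equivalence.connectedComponentsEquiv (e : C ≌ D) :
    ConnectedComponents C ≃ ConnectedComponents D where
  toFun := e.functor.mapConnectedComponents
  invFun := e.inverse.mapConnectedComponents
  left_inv := by
    rintro ⟨c⟩
    exact _root_.Quotient.sound (Zigzag.of_inv (e.unit.app c))
  right_inv := by
    rintro ⟨d⟩
    exact _root_.Quotient.sound (Zigzag.of_hom (e.counit.app d))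

end Equivalence

section Groupoid

variable {K : Type u₁} {L : Type u₂} {G : Type u₃}
    [Category.{v₁} K] [Groupoid.{v₂} L] [Category.{v₃} G]

def Groupoid.underEquivPUnit (l : L) : Under l ≌ Discrete PUnit.{1} where
  functor := Functor.star _
  inverse := Functor.fromPUnit (Under.mk (𝟙 l))
  unitIso := NatIso.ofComponents fun A ↦ Under.isoMk (asIso A.hom).symm
  counitIso := Iso.refl _

def Groupoid.underForgetCompIso (p : L ⥤ G) (l : L) :
    Under.forget l ⋙ p ≅ (underEquivPUnit l).functor ⋙ Functor.fromPUnit (p.obj l) :=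
  NatIso.ofComponents (fun A => p.mapIso (asIso A.hom).symm) (by simp [← Functor.map_comp])

def StructuredArrow.commaFstEquivalence (p : L ⥤ G) (m : K ⥤ G) (l : L) :
    StructuredArrow l (Comma.fst p m) ≌ StructuredArrow (p.obj l) m :=
  (ofCommaSndEquivalence p m l).trans <|
    (Comma.mapLeftIso m (Groupoid.underForgetCompIso p l)).trans
      (Comma.preLeft (Groupoid.underEquivPUnit l).functor _ m).asEquivalence

end Groupoid

end CategoryTheory

end

/-- The bicategorical pullback of a finite weak cover `m : K ⥤ G` along any functor
`p : L ⥤ G` of groupoids, i.e. the projection `Comma p m ⥤ L`, is a finite weak cover. -/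
theorem finiteWeakCover_pullback
    {K : Type u₁} {L : Type u₂} {G : Type u₃}
    [Groupoid.{v₁} K] [Groupoid.{v₂} L] [Groupoid.{v₃} G]
    (p : L ⥤ G) (m : K ⥤ G) (hm : FiniteWeakCover m) :
    FiniteWeakCover (Comma.fst p m) := by
  intro l
  obtain ⟨hthin, hfinite⟩ := hm (p.obj l)
  let e := StructuredArrow.commaFstEquivalence p m l
  exact ⟨e.functor.isThin_of_faithful, .of_equiv _ e.connectedComponentsEquiv.symm⟩
end

section
/- If q' : M ⥤ K and q : K ⥤ G are finite weak covers of groupoids, then the composite q ∘ q' : M ⥤ G is a finite weak cover. -/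
/-!
Over a groupoid, all homotopy fibers of `m` are thin exactly when `m` is faithful (the structure
maps `γ ⟶ m κ` are epimorphisms), and faithful functors compose. For the components: an object
`(μ, g)` of the fiber of `q' ⋙ q` over `γ` lies over a component of the fiber of `q` with
representative `(κ, h)`, and since `K` is a groupoid there is an arrow `k : (κ, h) ⟶ (q' μ, g)`;
then `(μ, k)` in the fiber of `q'` over `κ` is sent to `(μ, g)`. So finitely many components of
fibers of `q'` cover the components over `γ`.
-/

open CategoryTheory

namespace CategoryTheory

variable {B : Type*} {C : Type*} {D : Type*} [Category B] [Category C] [Category D]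

theorem IsGroupoid.nonempty_hom_of_zigzag [IsGroupoid C] {a b : C} (h : Zigzag a b) :
    Nonempty (a ⟶ b) := by
  induction h with
  | refl => exact ⟨𝟙 a⟩
  | tail _ hzag ih =>
    obtain ⟨f⟩ := ih
    rcases hzag with ⟨⟨g⟩⟩ | ⟨⟨g⟩⟩
    · exact ⟨f ≫ g⟩
    · exact ⟨f ≫ inv g⟩

namespace StructuredArrow

instance isGroupoid [IsGroupoid C] (d : D) (F : C ⥤ D) : IsGroupoid (StructuredArrow d F) :=
  isGroupoid_of_reflects_iso (proj d F)

theorem faithful_of_isThin (F : C ⥤ D) (h : ∀ d, Quiver.IsThin (StructuredArrow d F)) :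
    F.Faithful where
  map_injective {X _} {f g} hfg := by
    have := h (F.obj X)
    exact congrArg CommaMorphism.right <| Subsingleton.elim
      (homMk f : mk (𝟙 (F.obj X)) ⟶ mk (F.map f)) (homMk g (by simp [hfg]))

theorem isThin_of_faithful [IsGroupoid D] (F : C ⥤ D) [F.Faithful] (d : D) :
    Quiver.IsThin (StructuredArrow d F) := fun X _ =>
  ⟨fun f g => hom_ext f g <| F.map_injective <| (cancel_epi X.hom).1 (by simp only [w])⟩

theorem zigzag_map_post_obj_mk_right {F : B ⥤ C} {G : C ⥤ D} {d : D}
    {Y : StructuredArrow d G} {X : StructuredArrow d (F ⋙ G)} (k : Y ⟶ (pre d F G).obj X) :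
    Zigzag ((post Y.right F G ⋙ map Y.hom).obj (mk k.right)) X :=
  Zigzag.of_hom <| homMk (𝟙 X.right) <| by
    show (Y.hom ≫ G.map k.right) ≫ G.map (F.map (𝟙 X.right)) = X.hom
    simp

theorem finite_connectedComponents_comp [IsGroupoid C] (F : B ⥤ C) (G : C ⥤ D) (d : D)
    [Finite (ConnectedComponents (StructuredArrow d G))]
    [∀ c, Finite (ConnectedComponents (StructuredArrow c F))] :
    Finite (ConnectedComponents (StructuredArrow d (F ⋙ G))) := by
  refine Finite.of_surjective
    (fun p : Σ c : ConnectedComponents (StructuredArrow d G),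
        ConnectedComponents (StructuredArrow (Quotient.out c).right F) =>
      (post _ F G ⋙ map (Quotient.out p.1).hom).mapConnectedComponents p.2) ?_
  rintro ⟨X⟩
  let c : ConnectedComponents (StructuredArrow d G) := _root_.Quotient.mk _ ((pre d F G).obj X)
  obtain ⟨k⟩ := IsGroupoid.nonempty_hom_of_zigzag (_root_.Quotient.exact (Quotient.out_eq c))
  exact ⟨⟨c, _root_.Quotient.mk _ (mk k.right)⟩,
    _root_.Quotient.sound (zigzag_map_post_obj_mk_right k)⟩

end StructuredArrow

end CategoryTheory

theorem finiteWeakCover_iff {K : Type*} {G : Type*} [Category K] [Category G] [IsGroupoid G]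
    (m : K ⥤ G) :
    FiniteWeakCover m ↔ m.Faithful ∧ ∀ γ, Finite (ConnectedComponents (StructuredArrow γ m)) :=
  ⟨fun h => ⟨StructuredArrow.faithful_of_isThin m fun γ => (h γ).1, fun γ => (h γ).2⟩,
    fun ⟨_, h⟩ γ => ⟨StructuredArrow.isThin_of_faithful m γ, h γ⟩⟩

/-- The composite of finite weak covers of groupoids is a finite weak cover. -/
theorem finiteWeakCover_comp
    {M : Type u₁} {K : Type u₂} {G : Type u₃}
    [Groupoid.{v₁} M] [Groupoid.{v₂} K] [Groupoid.{v₃} G]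
    (q' : M ⥤ K) (q : K ⥤ G) (hq' : FiniteWeakCover q') (hq : FiniteWeakCover q) :
    FiniteWeakCover (q' ⋙ q) := by
  rw [finiteWeakCover_iff] at hq' hq ⊢
  obtain ⟨_, hq'_fin⟩ := hq'
  obtain ⟨_, hq_fin⟩ := hq
  exact ⟨Functor.Faithful.comp q' q,
    fun γ => StructuredArrow.finite_connectedComponents_comp q' q γ⟩
end

section
/- Let H be a category, F : H ⥤ Cat a functor, and η₀ an object of H. The canonical functor from F.obj η₀ to the homotopy fiber over η₀ of the forgetful functor π : Grothendieck F ⥤ H — sending an object φ of F.obj η₀ to the pair (⟨η₀, φ⟩, 𝟙_{η₀}) and a morphism f : φ' → φ to the morphism induced by (𝟙_{η₀}, f) — is fully faithful; and if H is a groupoid, it is an equivalence of categories. -/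
/-!
A morphism `(⟨η₀, φ'⟩, 𝟙) ⟶ (⟨η₀, φ⟩, 𝟙)` of the homotopy fiber has base `𝟙 η₀`, so it is a
vertical morphism of the Grothendieck construction and comes from `F.obj η₀`. If `h : η₀ ⟶ η` is
invertible, transporting `x : F.obj η` back along `h⁻¹` gives `φ` with
`(⟨η₀, φ⟩, 𝟙) ≅ (⟨η, x⟩, h)`, the isomorphism having base `h`.
-/

open CategoryTheory

/-- The canonical functor from the fiber `F.obj η₀` of `F : H ⥤ Cat` to the homotopy fiber
over `η₀` of the forgetful functor `Grothendieck F ⥤ H`, sending `φ` to `(⟨η₀, φ⟩, 𝟙 η₀)`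
and `f : φ' ⟶ φ` to the morphism induced by `(𝟙 η₀, f)`. -/
def fiberToHomotopyFiber {H : Type u} [Category.{v} H] (F : H ⥤ Cat.{v₂, u₂}) (η₀ : H) :
    F.obj η₀ ⥤ StructuredArrow η₀ (Grothendieck.forget F) :=
  (Grothendieck.ι F η₀).toStructuredArrow η₀ (Grothendieck.forget F)
    (fun _ => 𝟙 η₀) (fun _ => by simp [Grothendieck.ι] <;> first | exact Category.id_comp _ | erw [Category.id_comp])

namespace CategoryTheory.Grothendieck

variable {C : Type u} [Category.{v} C] {F : C ⥤ Cat.{v₂, u₂}}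

lemma exists_ι_map_eq_of_base_eq_id {c : C} {x y : F.obj c}
    (g : (⟨c, x⟩ : Grothendieck F) ⟶ ⟨c, y⟩) (hg : g.base = 𝟙 c) :
    ∃ f : x ⟶ y, (ι F c).map f = g := by
  obtain ⟨b, φ⟩ := g
  dsimp only at hg
  subst hg
  refine ⟨eqToHom (by simp) ≫ φ, Grothendieck.ext _ _ rfl ?_⟩
  simp only [ι, eqToHom_trans_assoc, eqToHom_refl, Category.id_comp]
  -- the remaining `eqToHom` relates objects that are equal only up to unfolding `ι`
  exact Category.id_comp φ

end CategoryTheory.Grothendieck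

section

variable {H : Type u} [Category.{v} H] (F : H ⥤ Cat.{v₂, u₂}) (η₀ : H)

lemma fiberToHomotopyFiber_comp_proj :
    fiberToHomotopyFiber F η₀ ⋙ StructuredArrow.proj η₀ _ = Grothendieck.ι F η₀ :=
  rfl

instance faithful_fiberToHomotopyFiber : (fiberToHomotopyFiber F η₀).Faithful :=
  Functor.Faithful.of_comp_eq (fiberToHomotopyFiber_comp_proj F η₀)

instance full_fiberToHomotopyFiber : (fiberToHomotopyFiber F η₀).Full where
  map_surjective {_ _} g := by
    obtain ⟨f, hf⟩ := Grothendieck.exists_ι_map_eq_of_base_eq_id g.right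
      ((Category.id_comp _).symm.trans g.w)
    exact ⟨f, StructuredArrow.hom_ext _ _ hf⟩

noncomputable def fiberToHomotopyFiberObjIsoOfIsIso (s : StructuredArrow η₀ (Grothendieck.forget F))
    [IsIso s.hom] :
    (fiberToHomotopyFiber F η₀).obj ((F.map (inv s.hom)).toFunctor.obj s.right.fiber) ≅ s :=
  StructuredArrow.isoMk (s.right.transportIso (asIso s.hom).symm) (Category.id_comp _)

end

/-- The canonical functor from the fiber of `F : H ⥤ Cat` over `η₀` to the homotopy fiber of
the forgetful functor `Grothendieck F ⥤ H` over `η₀` is fully faithful; and if `H` is a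
groupoid (every morphism is invertible), it is an equivalence of categories. -/
theorem fiberToHomotopyFiber_fullyFaithful_and_isEquivalence
    {H : Type u} [Category.{v} H] (F : H ⥤ Cat.{v₂, u₂}) (η₀ : H) :
    (fiberToHomotopyFiber F η₀).Full ∧ (fiberToHomotopyFiber F η₀).Faithful ∧
    ((∀ ⦃η η' : H⦄ (h : η ⟶ η'), IsIso h) → (fiberToHomotopyFiber F η₀).IsEquivalence) := by
  refine ⟨inferInstance, inferInstance, fun hiso => ?_⟩
  have : (fiberToHomotopyFiber F η₀).EssSurj :=
    ⟨fun s => have := hiso s.hom; ⟨_, ⟨fiberToHomotopyFiberObjIsoOfIsIso F η₀ s⟩⟩⟩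
  exact { }
end
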